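/- arXiv:2505.19639 — 3 statements merged into one kernel-verified Lean document; each statement's English description precedes it below -/
import Mathlib

section
/- The TLS state-space realization Â_tls (companion matrix built from the TLS solution â_tls) and the range-space-based realization Â_R = (Ô⁺)† Ô⁻ are similar matrices: there exists an invertible T with Â_tls = T⁻¹ Â_R T. Equivalently, both matrices have the same characteristic polynomial, whose coefficients are given by the entries of â_tls. -/
/-!
The last left singular vector `u` is orthogonal to the other columns of `U`, so `uᵀ Ô = 0`.
Dividing by its last entry, the last row of `Ô` is `-∑ aₖ (row k of Ô)`, which says that the
shifted factor satisfies `Ô⁻ = C Ô⁺` for the companion matrix `C` of `â_tls` (ones on the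
superdiagonal, last row `-â_tls`); hence `Â_R = (Ô⁺)⁻¹ C Ô⁺`. The observer canonical form is
similar to `C` through the unit lower-triangular Toeplitz matrix `W` built from the coefficients
of `p = Xⁿ + ∑ aⱼ Xʲ`, namely `W C = Â_tls W`, and `p` is the characteristic polynomial of `C`
by cofactor expansion along the first column.
-/

open Matrix Polynomial

theorem Fin.sum_ite_val_eq {M : Type*} [AddCommMonoid M] {m : ℕ} (f : Fin m → M) (t : ℕ) :
    ∑ k : Fin m, (if (k : ℕ) = t then f k else 0) = if h : t < m then f ⟨t, h⟩ else 0 := by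
  split_ifs with h
  · rw [Finset.sum_eq_single ⟨t, h⟩] <;> simp +contextual [Fin.ext_iff]
  · exact Finset.sum_eq_zero fun k _ => if_neg (by omega)

namespace Matrix

variable {R : Type*} [CommRing R] {m : ℕ}

def companion (a : Fin m → R) : Matrix (Fin m) (Fin m) R :=
  of fun i j => (if (j : ℕ) = i + 1 then 1 else 0) - if (i : ℕ) + 1 = m then a j else 0

def observerForm (a : Fin m → R) : Matrix (Fin m) (Fin m) R :=
  of fun i j => if (j : ℕ) = 0 then -a (Fin.rev i) else if (j : ℕ) = i + 1 then 1 else 0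

variable (a : Fin m → R)

theorem companion_mul_apply {ι : Type*} (M : Matrix (Fin m) ι R) (i : Fin m) (j : ι) :
    (companion a * M) i j =
      (if h : (i : ℕ) + 1 < m then M ⟨i + 1, h⟩ j else 0) -
        if (i : ℕ) + 1 = m then ∑ k, a k * M k j else 0 := by
  simp only [companion, mul_apply, of_apply, sub_mul, Finset.sum_sub_distrib, ite_mul, one_mul,
    zero_mul, Fin.sum_ite_val_eq]
  split_ifs <;> simp

theorem mul_companion_apply {ι : Type*} (M : Matrix ι (Fin m) R) (i : ι) (j : Fin m) :
    (M * companion a) i j =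
      (if 0 < (j : ℕ) then M i ⟨j - 1, Nat.sub_lt_of_lt j.2⟩ else 0) -
        M i ⟨m - 1, Nat.sub_one_lt_of_lt j.2⟩ * a j := by
  have hj : ∀ k : Fin m, ((j : ℕ) = k + 1) = ((k : ℕ) = j - 1 ∧ 0 < (j : ℕ)) :=
    fun k => propext (by omega)
  have hm : ∀ k : Fin m, ((k : ℕ) + 1 = m) = ((k : ℕ) = m - 1) := fun k => propext (by omega)
  simp only [companion, mul_apply, of_apply, mul_sub, Finset.sum_sub_distrib, mul_ite, mul_one,
    mul_zero, hj, hm, ite_and, Fin.sum_ite_val_eq]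
  rw [dif_pos (Nat.sub_lt_of_lt j.2), dif_pos (Nat.sub_one_lt_of_lt j.2)]

theorem observerForm_mul_apply {ι : Type*} (M : Matrix (Fin m) ι R) (i : Fin m) (j : ι) :
    (observerForm a * M) i j =
      -a (Fin.rev i) * M ⟨0, i.pos⟩ j + if h : (i : ℕ) + 1 < m then M ⟨i + 1, h⟩ j else 0 := by
  have hsplit : ∀ k : Fin m, observerForm a i k =
      (if (k : ℕ) = 0 then -a (Fin.rev i) else 0) + if (k : ℕ) = i + 1 then 1 else 0 := by
    intro k
    simp only [observerForm, of_apply]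
    split_ifs <;> first | omega | ring
  simp only [mul_apply, hsplit, add_mul, ite_mul, one_mul, zero_mul, Finset.sum_add_distrib,
    Fin.sum_ite_val_eq, dif_pos i.pos]

noncomputable def monicOfCoeffs (a : Fin m → R) : R[X] := X ^ m + ∑ j, C (a j) * X ^ (j : ℕ)

theorem coeff_monicOfCoeffs (t : ℕ) :
    (monicOfCoeffs a).coeff t = if h : t < m then a ⟨t, h⟩ else if t = m then 1 else 0 := by
  simp only [monicOfCoeffs, coeff_add, coeff_X_pow, finsetSum_coeff, coeff_C_mul_X_pow,
    @eq_comm ℕ t, Fin.sum_ite_val_eq]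
  split_ifs <;> first | omega | simp

theorem monicOfCoeffs_succ (a : Fin (m + 1) → R) :
    monicOfCoeffs a = X * monicOfCoeffs (a ∘ Fin.succ) + C (a 0) := by
  simp only [monicOfCoeffs, Fin.sum_univ_succ, Function.comp_apply, mul_add, Finset.mul_sum,
    Fin.val_zero, Fin.val_succ, pow_succ]
  ring_nf

theorem companion_submatrix_succ (a : Fin (m + 2) → R) :
    (companion a).submatrix Fin.succ Fin.succ = companion (a ∘ Fin.succ) := by
  ext i j
  simp [companion]

theorem charmatrix_submatrix_succ (A : Matrix (Fin (m + 1)) (Fin (m + 1)) R) :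
    (charmatrix A).submatrix Fin.succ Fin.succ = charmatrix (A.submatrix Fin.succ Fin.succ) := by
  ext i j
  simp [charmatrix_apply, diagonal_apply]

theorem det_charmatrix_companion_minor_last (a : Fin (m + 1) → R) :
    ((charmatrix (companion a)).submatrix Fin.castSucc Fin.succ).det = (-1) ^ m := by
  have hminor : (charmatrix (companion a)).submatrix Fin.castSucc Fin.succ =
      of fun i j : Fin m => (if (i : ℕ) = j + 1 then X else 0) - if (i : ℕ) = j then 1 else 0 := by
    ext i j
    simp only [submatrix_apply, charmatrix_apply, companion, of_apply, diagonal_apply,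
      Fin.ext_iff, Fin.val_succ, Fin.val_castSucc]
    split_ifs <;> first | omega | simp
  rw [hminor, det_of_isLowerTriangular]
  · simp
  · intro i j hij
    have hij : (i : ℕ) < j := hij
    simp only [of_apply]
    rw [if_neg (by omega), if_neg (by omega), sub_zero]

theorem charpoly_companion : ∀ {m : ℕ} (a : Fin m → R), (companion a).charpoly = monicOfCoeffs a
  | 0, a => by simp [monicOfCoeffs]
  | 1, a => by simp [charpoly, companion, monicOfCoeffs]
  | m + 2, a => by
    rw [charpoly, det_succ_column_zero, Fin.sum_univ_succ, Fin.sum_univ_castSucc]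
    have hzero : ∀ i : Fin m, (charmatrix (companion a)) i.castSucc.succ 0 = 0 := by
      intro i
      simp [companion, Fin.ext_iff]
      omega
    have hlast : (charmatrix (companion a)) (Fin.last (m + 1)) 0 = C (a 0) := by
      simp [companion, Fin.ext_iff]
    have h00 : (charmatrix (companion a)) 0 0 = X := by
      simp [companion]
    have hsign : ((-1 : R[X]) ^ (m + 1)) * (-1) ^ (m + 1) = 1 := by
      rw [← mul_pow]; simp
    rw [Finset.sum_eq_zero (fun i _ => by rw [hzero, mul_zero, zero_mul]), zero_add,
      Fin.succ_last, Fin.succAbove_last, det_charmatrix_companion_minor_last, hlast, h00,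
      Fin.succAbove_zero, charmatrix_submatrix_succ, companion_submatrix_succ, ← charpoly,
      charpoly_companion, monicOfCoeffs_succ a, Fin.val_last, Fin.val_zero, pow_zero, one_mul,
      Nat.succ_eq_add_one]
    linear_combination C (a 0) * hsign

-- `J K`, where `J` reverses the rows and `K` is the Hankel symmetrizer of the companion matrix
-- (`K C = Cᵀ K`); the observer form is `J Cᵀ J`.
noncomputable def observerIntertwiner (a : Fin m → R) : Matrix (Fin m) (Fin m) R :=
  of fun i j => (monicOfCoeffs a).coeff (m + j - i)

theorem det_observerIntertwiner : (observerIntertwiner a).det = 1 := by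
  rw [det_of_isLowerTriangular]
  · simp [observerIntertwiner, coeff_monicOfCoeffs]
  · intro i j hij
    have hij : (i : ℕ) < j := hij
    simp only [observerIntertwiner, of_apply, coeff_monicOfCoeffs]
    rw [dif_neg (by omega), if_neg (by omega)]

theorem observerIntertwiner_mul_companion :
    observerIntertwiner a * companion a = observerForm a * observerIntertwiner a := by
  ext i j
  rw [mul_companion_apply, observerForm_mul_apply]
  simp only [observerIntertwiner, of_apply, coeff_monicOfCoeffs]
  split_ifs <;> grind

theorem submatrix_succ_eq_companion_mul {ι : Type*} (O : Matrix (Fin (m + 1)) ι R)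
    (hlast : ∀ j, O (Fin.last m) j = -∑ k, a k * O k.castSucc j) :
    O.submatrix Fin.succ id = companion a * O.submatrix Fin.castSucc id := by
  ext i j
  rw [companion_mul_apply]
  split_ifs
  · omega
  · simp only [submatrix_apply, id, sub_zero]
    congr 1
  · have : i.succ = Fin.last m := Fin.ext (by simp; omega)
    simp [this, hlast]
  · omega

theorem last_row_eq_neg_sum_of_vecMul_eq_zero {K ι : Type*} [Field K]
    (O : Matrix (Fin (m + 1)) ι K) (v : Fin (m + 1) → K) (hv : v (Fin.last m) ≠ 0)
    (h : v ᵥ* O = 0) (j : ι) :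
    O (Fin.last m) j = -∑ k : Fin m, v k.castSucc / v (Fin.last m) * O k.castSucc j := by
  have hj : ∑ i, v i * O i j = 0 := congrFun h j
  rw [Fin.sum_univ_castSucc] at hj
  simp only [div_mul_eq_mul_div, ← Finset.sum_div]
  field_simp
  linear_combination hj

theorem exists_isUnit_eq_inv_mul_mul_of_mul_eq {ι : Type*} [Fintype ι] [DecidableEq ι] {A B S : Matrix ι ι R} (hS : IsUnit S) (h : S * B = A * S) :
    ∃ T, IsUnit T ∧ A = T⁻¹ * B * T := by
  have hdet := (isUnit_iff_isUnit_det S).1 hS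
  refine ⟨S⁻¹, (isUnit_nonsing_inv_iff).2 hS, ?_⟩
  rw [nonsing_inv_nonsing_inv S hdet]
  calc A = A * S * S⁻¹ := (mul_nonsing_inv_cancel_right S A hdet).symm
    _ = S * B * S⁻¹ := by rw [h]

theorem submatrix_succ_eq_companion_mul_of_transpose_mul_self {K : Type*} [Field K]
    (U : Matrix (Fin (m + 1)) (Fin (m + 1)) K) (hU : Uᵀ * U = 1)
    (hu : U (Fin.last m) (Fin.last m) ≠ 0) (d : Fin m → K) (O : Matrix (Fin (m + 1)) (Fin m) K)
    (hO : ∀ i j, O i j = U i j.castSucc * d j) :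
    O.submatrix Fin.succ id =
      companion (fun k => U k.castSucc (Fin.last m) / U (Fin.last m) (Fin.last m)) *
        O.submatrix Fin.castSucc id := by
  have horth : (fun i => U i (Fin.last m)) ᵥ* O = 0 := by
    ext j
    have hcol : (Uᵀ * U) (Fin.last m) j.castSucc = 0 := by
      rw [hU, one_apply_ne (Fin.castSucc_lt_last j).ne']
    simp only [mul_apply, transpose_apply] at hcol
    simp only [vecMul, dotProduct, hO, ← mul_assoc, ← Finset.sum_mul, hcol, zero_mul,
      Pi.zero_apply]
  exact submatrix_succ_eq_companion_mul _ O
    (last_row_eq_neg_sum_of_vecMul_eq_zero O (fun i => U i (Fin.last m)) hu horth)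

end Matrix

/-- The TLS realization `Â_tls` (the companion/observer-canonical-form matrix
built from the TLS solution `â_tls`, obtained from the last left singular vector of the
estimated Hankel matrix `Ĥ`) and the range-space realization `Â_R = (Ô⁺)⁻¹ Ô⁻` (from the
truncated SVD factor `Ô = Û₁ Ŝ₁^{1/2}`) are similar matrices; equivalently they have the same
characteristic polynomial, whose coefficients are the entries of `â_tls`. -/
theorem tls_realization_similar_to_range_space_realization
    (n : ℕ)
    (U : Matrix (Fin (n + 1)) (Fin (n + 1)) ℝ)
    (σ : Fin (n + 1) → ℝ)
    (hU : Uᵀ * U = 1)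
    -- the truncated-SVD observability factor Ô = Û₁ Ŝ₁^{1/2}
    (O : Matrix (Fin (n + 1)) (Fin n) ℝ)
    (hO : ∀ (i : Fin (n + 1)) (j : Fin n),
      O i j = U i (Fin.castSucc j) * Real.sqrt (σ (Fin.castSucc j)))
    (Op Om : Matrix (Fin n) (Fin n) ℝ)
    (hOp : ∀ (i j : Fin n), Op i j = O (Fin.castSucc i) j)
    (hOm : ∀ (i j : Fin n), Om i j = O (Fin.succ i) j)
    (hOpinv : IsUnit Op)
    (AR : Matrix (Fin n) (Fin n) ℝ) (hAR : AR = Op⁻¹ * Om)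
    -- the TLS solution (E29): â_tls = [a_n, ..., a_1] from the last left singular vector
    (hu : U (Fin.last n) (Fin.last n) ≠ 0)
    (atls : Fin n → ℝ)
    (hatls : ∀ j : Fin n,
      atls j = U (Fin.castSucc j) (Fin.last n) / U (Fin.last n) (Fin.last n))
    -- the companion (observer canonical form) matrix with first column -(â_1, ..., â_n)
    (Atls : Matrix (Fin n) (Fin n) ℝ)
    (hAtls : ∀ (i j : Fin n), Atls i j =
      if (j : ℕ) = 0 then -(atls ⟨n - 1 - (i : ℕ), by omega⟩)
      else if (j : ℕ) = (i : ℕ) + 1 then 1 else 0) :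
    (∃ T : Matrix (Fin n) (Fin n) ℝ, IsUnit T ∧ Atls = T⁻¹ * AR * T) ∧
    Atls.charpoly = AR.charpoly ∧
    (∀ j : Fin n, AR.charpoly.coeff (j : ℕ) = atls j) := by
  have hOmC : Om = companion atls * Op := by
    have hOm' : Om = O.submatrix Fin.succ id := ext hOm
    have hOp' : Op = O.submatrix Fin.castSucc id := ext hOp
    rw [hOm', hOp', funext hatls]
    exact submatrix_succ_eq_companion_mul_of_transpose_mul_self U hU hu _ O hO
  have hAtls' : Atls = observerForm atls := by
    ext i j
    have hrev : (⟨n - 1 - i, by omega⟩ : Fin n) = Fin.rev i := Fin.ext (by simp; omega)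
    rw [hAtls, hrev]
    rfl
  have hintertwine :
      observerIntertwiner atls * Op * AR = Atls * (observerIntertwiner atls * Op) := by
    rw [hAR, mul_assoc, mul_nonsing_inv_cancel_left _ _ ((isUnit_iff_isUnit_det Op).1 hOpinv),
      hOmC, ← mul_assoc, observerIntertwiner_mul_companion, hAtls', mul_assoc]
  have hunit : IsUnit (observerIntertwiner atls * Op) :=
    ((isUnit_iff_isUnit_det _).2 (by rw [det_observerIntertwiner]; exact isUnit_one)).mul hOpinv
  obtain ⟨T, hT, hsim⟩ := exists_isUnit_eq_inv_mul_mul_of_mul_eq hunit hintertwine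
  have hARC : AR = Op⁻¹ * companion atls * Op := by rw [hAR, hOmC, mul_assoc]
  refine ⟨⟨T, hT, hsim⟩, ?_, fun j => ?_⟩
  · rw [hsim, ← hT.unit_spec, charpoly_units_conj']
  · rw [hARC, ← hOpinv.unit_spec, charpoly_units_conj', charpoly_companion, coeff_monicOfCoeffs,
      dif_pos j.2]
end

section
/- (Golub–Van Loan sensitivity bound) If σ̂_{n_x}⁺ > σ̂_{n_x+1}, then the TLS and OLS solutions satisfy ‖â_tls - â_ols‖ ≤ ‖Ĥ⁻‖ ρ_ols / ((σ̂_{n_x}⁺)² - σ̂²_{n_x+1}), where ρ_ols = ‖Ĥ⁻ - â_ols Ĥ⁺‖. -/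
/-!
With `B = Ĥ⁺(Ĥ⁺)ᵀ` and `σ = σ̂_{n_x+1}`, the resolvent identity
`(B - σ²I)⁻¹ - B⁻¹ = σ² (B - σ²I)⁻¹ B⁻¹` gives `â_tls - â_ols = -σ² z`, where the row vector
`z = Ĥ⁻(Ĥ⁺)ᵀ(B - σ²I)⁻¹B⁻¹` solves `z B (B - σ²I) = Ĥ⁻(Ĥ⁺)ᵀ`. Pairing this equation with `z`
and using `‖x Ĥ⁺‖ ≥ σ̂⁺‖x‖` twice yields `σ̂⁺ ((σ̂⁺)² - σ²) ‖z‖ ≤ ‖Ĥ⁻‖`. Finally the stacked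
matrix maps the vector `(-â_ols, 1)`, of norm at least `1`, to the OLS residual, so
`σ ≤ ρ_ols` and hence `σ² ≤ σ̂⁺ ρ_ols`.
-/

open Matrix

/-- The Euclidean norm of a finite real vector. -/
noncomputable def euclNorm {k : ℕ} (x : Fin k → ℝ) : ℝ := Real.sqrt (∑ i, x i ^ 2)

/-- The smallest singular value of a (wide) matrix `M : r × c` with `r ≤ c`, characterized as
the infimum of `‖xᵀM‖` over unit vectors `x`. -/
noncomputable def sminSV {r c : ℕ} (M : Matrix (Fin r) (Fin c) ℝ) : ℝ :=
  sInf {t | ∃ x : Fin r → ℝ, euclNorm x = 1 ∧ t = euclNorm (x ᵥ* M)}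

lemma euclNorm_eq_norm {k : ℕ} (x : Fin k → ℝ) : euclNorm x = ‖WithLp.toLp 2 x‖ := by
  simp [euclNorm, EuclideanSpace.norm_eq]

lemma euclNorm_nonneg {k : ℕ} (x : Fin k → ℝ) : 0 ≤ euclNorm x := Real.sqrt_nonneg _

lemma euclNorm_eq_zero {k : ℕ} {x : Fin k → ℝ} : euclNorm x = 0 ↔ x = 0 := by
  simp [euclNorm_eq_norm]

lemma euclNorm_smul {k : ℕ} (c : ℝ) (x : Fin k → ℝ) : euclNorm (c • x) = |c| * euclNorm x := by
  simp only [euclNorm_eq_norm, WithLp.toLp_smul, norm_smul, Real.norm_eq_abs]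

lemma euclNorm_neg {k : ℕ} (x : Fin k → ℝ) : euclNorm (-x) = euclNorm x := by
  simp only [euclNorm_eq_norm, WithLp.toLp_neg, norm_neg]

lemma abs_apply_le_euclNorm {k : ℕ} (x : Fin k → ℝ) (i : Fin k) : |x i| ≤ euclNorm x := by
  simpa [euclNorm_eq_norm] using PiLp.norm_apply_le (WithLp.toLp 2 x) i

lemma euclNorm_sq {k : ℕ} (x : Fin k → ℝ) : euclNorm x ^ 2 = x ⬝ᵥ x := by
  rw [euclNorm_eq_norm, ← real_inner_self_eq_norm_sq (WithLp.toLp 2 x : EuclideanSpace ℝ (Fin k)),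
    EuclideanSpace.inner_eq_star_dotProduct]
  rfl

lemma dotProduct_le_euclNorm_mul_euclNorm {k : ℕ} (x y : Fin k → ℝ) :
    x ⬝ᵥ y ≤ euclNorm x * euclNorm y := by
  simpa [euclNorm_eq_norm, EuclideanSpace.inner_eq_star_dotProduct, mul_comm] using
    real_inner_le_norm (WithLp.toLp 2 y : EuclideanSpace ℝ (Fin k)) (WithLp.toLp 2 x)

section SingularValue

variable {r c : ℕ} (M : Matrix (Fin r) (Fin c) ℝ)

lemma sminSV_nonneg : 0 ≤ sminSV M :=
  Real.sInf_nonneg (by rintro t ⟨x, -, rfl⟩; exact euclNorm_nonneg _)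

lemma sminSV_mul_euclNorm_le (x : Fin r → ℝ) : sminSV M * euclNorm x ≤ euclNorm (x ᵥ* M) := by
  rcases eq_or_ne x 0 with rfl | hx
  · simp [euclNorm_eq_zero.2 rfl]
  have hpos : 0 < euclNorm x := (euclNorm_nonneg x).lt_of_ne' (mt euclNorm_eq_zero.1 hx)
  have hunit : euclNorm ((euclNorm x)⁻¹ • x) = 1 := by
    rw [euclNorm_smul, abs_inv, abs_of_pos hpos, inv_mul_cancel₀ hpos.ne']
  have hle : sminSV M ≤ euclNorm (((euclNorm x)⁻¹ • x) ᵥ* M) :=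
    csInf_le ⟨0, by rintro t ⟨y, -, rfl⟩; exact euclNorm_nonneg _⟩ ⟨_, hunit, rfl⟩
  rw [smul_vecMul, euclNorm_smul, abs_inv, abs_of_pos hpos, le_inv_mul_iff₀ hpos] at hle
  rwa [mul_comm]

lemma vecMul_mul_transpose_dotProduct (y : Fin r → ℝ) :
    y ᵥ* (M * Mᵀ) ⬝ᵥ y = euclNorm (y ᵥ* M) ^ 2 := by
  rw [← vecMul_vecMul, ← dotProduct_mulVec, mulVec_transpose, euclNorm_sq]

lemma isUnit_det_mul_transpose_sub_smul {t : ℝ} (ht : t < sminSV M ^ 2) :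
    IsUnit (M * Mᵀ - t • 1).det := by
  rw [isUnit_iff_ne_zero, Ne, ← exists_vecMul_eq_zero_iff]
  rintro ⟨v, hv, hvA⟩
  have hquad : v ᵥ* (M * Mᵀ - t • 1) ⬝ᵥ v = euclNorm (v ᵥ* M) ^ 2 - t * euclNorm v ^ 2 := by
    rw [vecMul_sub, sub_dotProduct, vecMul_mul_transpose_dotProduct, vecMul_smul, vecMul_one,
      smul_dotProduct, euclNorm_sq v, smul_eq_mul]
  rw [hvA, zero_dotProduct] at hquad
  have hpos : 0 < euclNorm v := (euclNorm_nonneg v).lt_of_ne' (mt euclNorm_eq_zero.1 hv)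
  have hbound := sminSV_mul_euclNorm_le M v
  nlinarith [mul_le_mul hbound hbound (mul_nonneg (sminSV_nonneg M) hpos.le) (euclNorm_nonneg _),
    mul_pos (sub_pos.2 ht) (pow_pos hpos 2)]

lemma isUnit_det_mul_transpose (h : 0 < sminSV M) : IsUnit (M * Mᵀ).det := by
  simpa using isUnit_det_mul_transpose_sub_smul M (t := 0) (by positivity)

lemma sminSV_mul_euclNorm_vecMul_le (z : Fin r → ℝ) :
    sminSV M * euclNorm (z ᵥ* M) ≤ euclNorm (z ᵥ* (M * Mᵀ)) := by
  set q := euclNorm (z ᵥ* M)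
  rcases (show 0 ≤ q from euclNorm_nonneg _).eq_or_lt with hq | hq
  · rw [← hq, mul_zero]; exact euclNorm_nonneg _
  have hcs : q ^ 2 ≤ euclNorm (z ᵥ* (M * Mᵀ)) * euclNorm z := by
    rw [← vecMul_mul_transpose_dotProduct]; exact dotProduct_le_euclNorm_mul_euclNorm _ _
  refine le_of_mul_le_mul_right ?_ hq
  calc sminSV M * q * q = sminSV M * q ^ 2 := by ring
    _ ≤ sminSV M * (euclNorm (z ᵥ* (M * Mᵀ)) * euclNorm z) := by
        gcongr; exact sminSV_nonneg M
    _ = euclNorm (z ᵥ* (M * Mᵀ)) * (sminSV M * euclNorm z) := by ring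
    _ ≤ euclNorm (z ᵥ* (M * Mᵀ)) * q := by
        gcongr; exacts [euclNorm_nonneg _, sminSV_mul_euclNorm_le M z]

lemma euclNorm_vecMul_transpose_mul_inv_mul_inv_le {t : ℝ} (ht : 0 ≤ t) (hts : t < sminSV M ^ 2)
    (w : Fin c → ℝ) :
    euclNorm (w ᵥ* (Mᵀ * (M * Mᵀ - t • 1)⁻¹ * (M * Mᵀ)⁻¹)) ≤
      euclNorm w / (sminSV M * (sminSV M ^ 2 - t)) := by
  set s := sminSV M
  set z := w ᵥ* (Mᵀ * (M * Mᵀ - t • 1)⁻¹ * (M * Mᵀ)⁻¹)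
  set y := z ᵥ* (M * Mᵀ)
  set q := euclNorm (z ᵥ* M)
  have hs : 0 < s := by nlinarith [sminSV_nonneg M]
  have hB := isUnit_det_mul_transpose M hs
  have hA := isUnit_det_mul_transpose_sub_smul M hts
  have hy : y ᵥ* (M * Mᵀ - t • 1) = w ᵥ* Mᵀ := by
    simp only [y, z, vecMul_vecMul, Matrix.mul_assoc, nonsing_inv_mul _ hB,
      nonsing_inv_mul _ hA, Matrix.mul_one]
  have hyq : s * q ≤ euclNorm y := sminSV_mul_euclNorm_vecMul_le M z
  -- `y ⬝ᵥ z = q ^ 2` and, as `M * Mᵀ` is symmetric, `(y ᵥ* (M * Mᵀ)) ⬝ᵥ z = y ⬝ᵥ y`.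
  have hkey : euclNorm y ^ 2 - t * q ^ 2 ≤ q * euclNorm w :=
    calc euclNorm y ^ 2 - t * q ^ 2 = y ᵥ* (M * Mᵀ - t • 1) ⬝ᵥ z := by
          rw [vecMul_sub, sub_dotProduct, vecMul_smul, vecMul_one, smul_dotProduct, smul_eq_mul,
            vecMul_mul_transpose_dotProduct, ← dotProduct_mulVec, ← vecMul_transpose,
            transpose_mul, transpose_transpose, euclNorm_sq]
      _ = (z ᵥ* M) ⬝ᵥ w := by rw [hy, vecMul_transpose, dotProduct_comm, dotProduct_mulVec]
      _ ≤ q * euclNorm w := dotProduct_le_euclNorm_mul_euclNorm _ _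
  have hq : (s ^ 2 - t) * q ≤ euclNorm w := by
    rcases (show 0 ≤ q from euclNorm_nonneg _).eq_or_lt with hq0 | hqpos
    · rw [← hq0, mul_zero]; exact euclNorm_nonneg w
    refine le_of_mul_le_mul_right ?_ hqpos
    nlinarith [mul_le_mul hyq hyq (by positivity) (euclNorm_nonneg y)]
  rw [le_div_iff₀ (by nlinarith)]
  calc euclNorm z * (s * (s ^ 2 - t)) = (s ^ 2 - t) * (s * euclNorm z) := by ring
    _ ≤ (s ^ 2 - t) * q := by gcongr; exact sminSV_mul_euclNorm_le M z
    _ ≤ euclNorm w := hq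

end SingularValue

lemma inv_sub_smul_one_sub_inv {n K : Type*} [Fintype n] [DecidableEq n] [Field K]
    {B : Matrix n n K} {t : K} (hA : IsUnit (B - t • 1).det) (hB : IsUnit B.det) :
    (B - t • 1)⁻¹ - B⁻¹ = t • ((B - t • 1)⁻¹ * B⁻¹) := by
  rw [inv_sub_inv (by simp only [isUnit_iff_isUnit_det, hA, hB]), sub_sub_cancel,
    Matrix.mul_smul, Matrix.mul_one, Matrix.smul_mul]

lemma snoc_vecMul_of_rows {n m : ℕ} {P : Matrix (Fin n) (Fin m) ℝ} {R : Matrix (Fin 1) (Fin m) ℝ}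
    {H : Matrix (Fin (n + 1)) (Fin m) ℝ}
    (hH : ∀ i j, H i j = if h : (i : ℕ) < n then P ⟨i, h⟩ j else R 0 j)
    (x : Fin n → ℝ) (a : ℝ) : Fin.snoc (α := fun _ => ℝ) x a ᵥ* H = x ᵥ* P + a • R 0 := by
  ext j
  simp [vecMul, dotProduct, Fin.sum_univ_castSucc, hH]

lemma sminSV_le_euclNorm_sub_mul {n m : ℕ} {P : Matrix (Fin n) (Fin m) ℝ}
    {R : Matrix (Fin 1) (Fin m) ℝ} {H : Matrix (Fin (n + 1)) (Fin m) ℝ}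
    (hH : ∀ i j, H i j = if h : (i : ℕ) < n then P ⟨i, h⟩ j else R 0 j)
    (a : Matrix (Fin 1) (Fin n) ℝ) : sminSV H ≤ euclNorm ((R - a * P) 0) := by
  set x := Fin.snoc (α := fun _ => ℝ) (-a 0) 1
  have hx : 1 ≤ euclNorm x := by
    simpa [x] using abs_apply_le_euclNorm x (Fin.last n)
  have hxH : x ᵥ* H = (R - a * P) 0 := by
    rw [snoc_vecMul_of_rows hH, neg_vecMul, one_smul, neg_add_eq_sub, ← mul_apply_eq_vecMul]
    rfl
  calc sminSV H ≤ sminSV H * euclNorm x := le_mul_of_one_le_right (sminSV_nonneg H) hx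
    _ ≤ euclNorm ((R - a * P) 0) := hxH ▸ sminSV_mul_euclNorm_le H x

/-- Golub–Van Loan sensitivity bound: if `σ̂⁺_{n_x} > σ̂_{n_x+1}` then
`‖â_tls - â_ols‖ ≤ ‖Ĥ⁻‖ ρ_ols / ((σ̂⁺_{n_x})² - σ̂²_{n_x+1})`,
where `ρ_ols = ‖Ĥ⁻ - â_ols Ĥ⁺‖`. -/
theorem golub_van_loan_tls_ols_bound
    (nx p : ℕ)
    (Hp : Matrix (Fin nx) (Fin (p + 1)) ℝ)
    (Hm : Matrix (Fin 1) (Fin (p + 1)) ℝ)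
    (H : Matrix (Fin (nx + 1)) (Fin (p + 1)) ℝ)
    (hH : ∀ (i : Fin (nx + 1)) (j : Fin (p + 1)),
      H i j = if h : (i : ℕ) < nx then Hp ⟨i, h⟩ j else Hm 0 j)
    (σp σ : ℝ) (hσp : σp = sminSV Hp) (hσ : σ = sminSV H)
    (hgap : σ < σp)
    (aols atls : Matrix (Fin 1) (Fin nx) ℝ)
    (hols : aols = -(Hm * Hpᵀ * (Hp * Hpᵀ)⁻¹))
    (htls : atls = -(Hm * Hpᵀ * (Hp * Hpᵀ - σ ^ 2 • (1 : Matrix (Fin nx) (Fin nx) ℝ))⁻¹)) :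
    euclNorm (fun j => (atls - aols) 0 j) ≤
      euclNorm (fun j => Hm 0 j) * euclNorm (fun j => (Hm - aols * Hp) 0 j) /
        (σp ^ 2 - σ ^ 2) := by
  subst hσp
  have hσ0 : 0 ≤ σ := hσ ▸ sminSV_nonneg H
  have hσ2 : σ ^ 2 < sminSV Hp ^ 2 := by gcongr
  have hσρ : σ ≤ euclNorm ((Hm - aols * Hp) 0) := hσ ▸ sminSV_le_euclNorm_sub_mul hH aols
  have hdiff : (atls - aols) 0 =
      -(σ ^ 2 • (Hm 0 ᵥ* (Hpᵀ * (Hp * Hpᵀ - σ ^ 2 • 1)⁻¹ * (Hp * Hpᵀ)⁻¹))) := by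
    have hA := isUnit_det_mul_transpose_sub_smul Hp hσ2
    have hB := isUnit_det_mul_transpose Hp (hσ0.trans_lt hgap)
    rw [htls, hols, neg_sub_neg, ← neg_sub, ← Matrix.mul_sub, inv_sub_smul_one_sub_inv hA hB,
      Matrix.mul_smul, ← mul_apply_eq_vecMul]
    simp only [Matrix.mul_assoc]
    rfl
  have hz := euclNorm_vecMul_transpose_mul_inv_mul_inv_le Hp (sq_nonneg σ) hσ2 (Hm 0)
  calc euclNorm ((atls - aols) 0)
      = σ ^ 2 * euclNorm (Hm 0 ᵥ* (Hpᵀ * (Hp * Hpᵀ - σ ^ 2 • 1)⁻¹ * (Hp * Hpᵀ)⁻¹)) := by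
        rw [hdiff, euclNorm_neg, euclNorm_smul, abs_sq]
    _ ≤ (sminSV Hp * euclNorm ((Hm - aols * Hp) 0)) *
        (euclNorm (Hm 0) / (sminSV Hp * (sminSV Hp ^ 2 - σ ^ 2))) := by
        exact mul_le_mul (by nlinarith) hz (euclNorm_nonneg _)
          (mul_nonneg (hσ0.trans hgap.le) (euclNorm_nonneg _))
    _ = euclNorm (Hm 0) * euclNorm ((Hm - aols * Hp) 0) / (sminSV Hp ^ 2 - σ ^ 2) := by
        field_simp [(hσ0.trans_lt hgap).ne', (sub_pos.2 hσ2).ne']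
end

section
/- (Wedin pseudo-inverse perturbation bound) Let M₁, M₂ ∈ ℝ^{m×n} with m ≤ n both have full row rank m. Then ‖M₁† - M₂†‖ ≤ √2 ‖M₁†‖ ‖M₂†‖ ‖M₁ - M₂‖, where † denotes the Moore–Penrose pseudo-inverse and ‖·‖ the spectral norm. -/
open Matrix
open scoped Matrix.Norms.L2Operator

/-!
Let `Q = M₁† M₁`, the orthogonal projection onto the row space of `M₁`, and `E = M₁ - M₂`.
Since `Mᵢ Mᵢ† = 1` and `M₂† = M₂ᴴ (M₂†ᴴ M₂†)`,
`Q (M₁† - M₂†) = M₁† (M₂ - M₁) M₂†` and `(1 - Q) (M₁† - M₂†) = (1 - Q) Eᴴ (M₂†ᴴ M₂†)`,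
while the C⋆-identity `‖X‖² = ‖Xᴴ X‖` gives `‖X‖² ≤ ‖Q X‖² + ‖(1 - Q) X‖²`. Hence
`‖M₁† - M₂†‖² ≤ (‖M₁†‖ ‖M₂†‖ ‖E‖)² + (‖M₂†‖² ‖E‖)²`. The same holds with `M₁` and `M₂`
swapped, and whichever of the two bounds has the smaller of `‖M₁†‖`, `‖M₂†‖` squared is at most
`2 (‖M₁†‖ ‖M₂†‖ ‖E‖)²`.
-/

namespace Matrix

theorem isUnit_of_rank_eq_card {K n : Type*} [Field K] [Fintype n] [DecidableEq n]
    {A : Matrix n n K} (h : A.rank = Fintype.card n) : IsUnit A := by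
  rw [← mulVec_surjective_iff_isUnit, ← coe_mulVecLin, ← LinearMap.range_eq_top]
  exact Submodule.eq_top_of_finrank_eq (h.trans (Module.finrank_fintype_fun_eq_card K).symm)

theorem isUnit_mul_conjTranspose_of_rank_eq_card {K m n : Type*} [Field K] [PartialOrder K]
    [StarRing K] [StarOrderedRing K] [Fintype m] [Fintype n] [DecidableEq m]
    {A : Matrix m n K} (h : A.rank = Fintype.card m) : IsUnit (A * Aᴴ) :=
  isUnit_of_rank_eq_card (by rw [rank_self_mul_conjTranspose, h])

section StarProjection

theorem conjTranspose_mul_self_of_isStarProjection {R n k : Type*} [CommSemiring R]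
    [StarRing R] [Fintype n] {Q : Matrix n n R} (hQ : IsStarProjection Q) (A : Matrix n k R) :
    (Q * A)ᴴ * (Q * A) = Aᴴ * Q * A := by
  rw [conjTranspose_mul, ← star_eq_conjTranspose, hQ.isSelfAdjoint.star_eq, Matrix.mul_assoc,
    ← Matrix.mul_assoc Q, hQ.isIdempotentElem.eq, Matrix.mul_assoc]

variable {𝕜 n k : Type*} [RCLike 𝕜] [Fintype n] [Fintype k] [DecidableEq n] [DecidableEq k]
  {Q : Matrix n n 𝕜}

theorem l2_opNorm_sq_le_of_isStarProjection (hQ : IsStarProjection Q) (A : Matrix n k 𝕜) :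
    ‖A‖ ^ 2 ≤ ‖Q * A‖ ^ 2 + ‖(1 - Q) * A‖ ^ 2 := by
  calc ‖A‖ ^ 2 = ‖Aᴴ * A‖ := by rw [l2_opNorm_conjTranspose_mul_self, sq]
    _ = ‖(Q * A)ᴴ * (Q * A) + ((1 - Q) * A)ᴴ * ((1 - Q) * A)‖ := by
        rw [conjTranspose_mul_self_of_isStarProjection hQ,
          conjTranspose_mul_self_of_isStarProjection hQ.one_sub, ← Matrix.add_mul,
          ← Matrix.mul_add, add_sub_cancel, Matrix.mul_one]
    _ ≤ ‖Q * A‖ ^ 2 + ‖(1 - Q) * A‖ ^ 2 := by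
        rw [sq, sq, ← l2_opNorm_conjTranspose_mul_self, ← l2_opNorm_conjTranspose_mul_self]
        exact norm_add_le _ _

theorem l2_opNorm_mul_le_of_isStarProjection (hQ : IsStarProjection Q) (A : Matrix n k 𝕜) :
    ‖Q * A‖ ≤ ‖A‖ :=
  (l2_opNorm_mul Q A).trans (mul_le_of_le_one_left (norm_nonneg A) (hQ.norm_le Q))

end StarProjection

section RightPinv

variable {R m n : Type*} [CommRing R] [StarRing R] [Fintype m] [Fintype n] [DecidableEq m]

/-- `A†` in the paper: the Moore–Penrose inverse of `A` whenever `A Aᴴ` is invertible. -/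
noncomputable def rightPinv (A : Matrix m n R) : Matrix n m R := Aᴴ * (A * Aᴴ)⁻¹

variable {A B : Matrix m n R}

theorem mul_rightPinv (hA : IsUnit (A * Aᴴ)) : A * A.rightPinv = 1 := by
  rw [rightPinv, ← Matrix.mul_assoc, mul_nonsing_inv _ ((isUnit_iff_isUnit_det _).mp hA)]

theorem conjTranspose_rightPinv : A.rightPinvᴴ = (A * Aᴴ)⁻¹ * A := by
  rw [rightPinv, conjTranspose_mul, conjTranspose_nonsing_inv,
    (isHermitian_mul_conjTranspose_self A).eq, conjTranspose_conjTranspose]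

theorem conjTranspose_rightPinv_mul_rightPinv (hA : IsUnit (A * Aᴴ)) :
    A.rightPinvᴴ * A.rightPinv = (A * Aᴴ)⁻¹ := by
  rw [conjTranspose_rightPinv, Matrix.mul_assoc, mul_rightPinv hA, Matrix.mul_one]

theorem rightPinv_eq_conjTranspose_mul (hA : IsUnit (A * Aᴴ)) :
    A.rightPinv = Aᴴ * (A.rightPinvᴴ * A.rightPinv) := by
  rw [conjTranspose_rightPinv_mul_rightPinv hA, rightPinv]

theorem isStarProjection_rightPinv_mul (hA : IsUnit (A * Aᴴ)) :
    IsStarProjection (A.rightPinv * A) where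
  isIdempotentElem := by
    rw [IsIdempotentElem, Matrix.mul_assoc, ← Matrix.mul_assoc A, mul_rightPinv hA,
      Matrix.one_mul]
  isSelfAdjoint := by
    rw [IsSelfAdjoint, star_eq_conjTranspose, conjTranspose_mul, conjTranspose_rightPinv,
      rightPinv, Matrix.mul_assoc]

theorem rightPinv_mul_mul_rightPinv_sub_rightPinv (hA : IsUnit (A * Aᴴ)) (hB : IsUnit (B * Bᴴ)) :
    A.rightPinv * A * (A.rightPinv - B.rightPinv) = A.rightPinv * (B - A) * B.rightPinv := by
  simp only [Matrix.mul_sub, Matrix.sub_mul, Matrix.mul_assoc, mul_rightPinv hA, mul_rightPinv hB]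

variable [DecidableEq n]

theorem one_sub_rightPinv_mul_mul_conjTranspose (hA : IsUnit (A * Aᴴ)) :
    (1 - A.rightPinv * A) * Aᴴ = 0 := by
  rw [Matrix.sub_mul, Matrix.one_mul, rightPinv, Matrix.mul_assoc, Matrix.mul_assoc,
    nonsing_inv_mul _ ((isUnit_iff_isUnit_det _).mp hA), Matrix.mul_one, sub_self]

theorem one_sub_rightPinv_mul_mul_rightPinv (hA : IsUnit (A * Aᴴ)) :
    (1 - A.rightPinv * A) * A.rightPinv = 0 := by
  show (1 - A.rightPinv * A) * (Aᴴ * (A * Aᴴ)⁻¹) = 0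
  rw [← Matrix.mul_assoc, one_sub_rightPinv_mul_mul_conjTranspose hA, Matrix.zero_mul]

theorem one_sub_rightPinv_mul_mul_rightPinv_sub_rightPinv (hA : IsUnit (A * Aᴴ))
    (hB : IsUnit (B * Bᴴ)) :
    (1 - A.rightPinv * A) * (A.rightPinv - B.rightPinv)
      = (1 - A.rightPinv * A) * (A - B)ᴴ * (B.rightPinvᴴ * B.rightPinv) := by
  set Q := A.rightPinv * A
  set G := B.rightPinvᴴ * B.rightPinv
  calc (1 - Q) * (A.rightPinv - B.rightPinv) = 0 - (1 - Q) * Bᴴ * G := by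
        rw [Matrix.mul_sub, one_sub_rightPinv_mul_mul_rightPinv hA, Matrix.mul_assoc,
          ← rightPinv_eq_conjTranspose_mul hB]
    _ = (1 - Q) * Aᴴ * G - (1 - Q) * Bᴴ * G := by
        rw [one_sub_rightPinv_mul_mul_conjTranspose hA, Matrix.zero_mul]
    _ = (1 - Q) * (A - B)ᴴ * G := by
        rw [conjTranspose_sub, Matrix.mul_sub, Matrix.sub_mul _ _ G]

end RightPinv

section Wedin

variable {𝕜 m n : Type*} [RCLike 𝕜] [Fintype m] [Fintype n] [DecidableEq m] [DecidableEq n]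
  {A B : Matrix m n 𝕜}

theorem norm_rightPinv_sub_rightPinv_sq_le (hA : IsUnit (A * Aᴴ)) (hB : IsUnit (B * Bᴴ)) :
    ‖A.rightPinv - B.rightPinv‖ ^ 2
      ≤ (‖A.rightPinv‖ * ‖B.rightPinv‖ * ‖A - B‖) ^ 2 + (‖B.rightPinv‖ ^ 2 * ‖A - B‖) ^ 2 := by
  have hQ := isStarProjection_rightPinv_mul hA
  have row_space_part : ‖A.rightPinv * A * (A.rightPinv - B.rightPinv)‖
      ≤ ‖A.rightPinv‖ * ‖B.rightPinv‖ * ‖A - B‖ := by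
    rw [rightPinv_mul_mul_rightPinv_sub_rightPinv hA hB]
    calc ‖A.rightPinv * (B - A) * B.rightPinv‖
        ≤ ‖A.rightPinv‖ * ‖B - A‖ * ‖B.rightPinv‖ :=
          (l2_opNorm_mul _ _).trans (by gcongr; exact l2_opNorm_mul _ _)
      _ = ‖A.rightPinv‖ * ‖B.rightPinv‖ * ‖A - B‖ := by rw [norm_sub_rev]; ring
  have kernel_part : ‖(1 - A.rightPinv * A) * (A.rightPinv - B.rightPinv)‖
      ≤ ‖B.rightPinv‖ ^ 2 * ‖A - B‖ := by
    rw [one_sub_rightPinv_mul_mul_rightPinv_sub_rightPinv hA hB]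
    calc ‖(1 - A.rightPinv * A) * (A - B)ᴴ * (B.rightPinvᴴ * B.rightPinv)‖
        ≤ ‖(A - B)ᴴ‖ * ‖B.rightPinvᴴ * B.rightPinv‖ :=
          (l2_opNorm_mul _ _).trans
            (by gcongr; exact l2_opNorm_mul_le_of_isStarProjection hQ.one_sub _)
      _ = ‖B.rightPinv‖ ^ 2 * ‖A - B‖ := by
          rw [l2_opNorm_conjTranspose, l2_opNorm_conjTranspose_mul_self]; ring
  calc ‖A.rightPinv - B.rightPinv‖ ^ 2
      ≤ ‖A.rightPinv * A * (A.rightPinv - B.rightPinv)‖ ^ 2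
        + ‖(1 - A.rightPinv * A) * (A.rightPinv - B.rightPinv)‖ ^ 2 :=
        l2_opNorm_sq_le_of_isStarProjection hQ _
    _ ≤ _ := by gcongr

theorem norm_rightPinv_sub_rightPinv_le (hA : IsUnit (A * Aᴴ)) (hB : IsUnit (B * Bᴴ)) :
    ‖A.rightPinv - B.rightPinv‖ ≤ √2 * ‖A.rightPinv‖ * ‖B.rightPinv‖ * ‖A - B‖ := by
  have hAB := norm_rightPinv_sub_rightPinv_sq_le hA hB
  have hBA := norm_rightPinv_sub_rightPinv_sq_le hB hA
  rw [norm_sub_rev B.rightPinv, norm_sub_rev B] at hBA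
  set a := ‖A.rightPinv‖
  set b := ‖B.rightPinv‖
  set e := ‖A - B‖
  have ha : 0 ≤ a := norm_nonneg _
  have hb : 0 ≤ b := norm_nonneg _
  have hsq : ‖A.rightPinv - B.rightPinv‖ ^ 2 ≤ (√2 * a * b * e) ^ 2 := by
    rw [mul_pow, mul_pow, mul_pow, Real.sq_sqrt zero_le_two]
    rcases le_total a b with hab | hba
    · nlinarith [mul_le_mul hab hab ha hb, sq_nonneg (a * e)]
    · nlinarith [mul_le_mul hba hba hb ha, sq_nonneg (b * e)]
  exact (pow_le_pow_iff_left₀ (norm_nonneg _) (by positivity) two_ne_zero).mp hsq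

end Wedin

end Matrix

theorem wedin_pseudoinverse_perturbation_general
    (m n : ℕ)
    (M₁ M₂ : Matrix (Fin m) (Fin n) ℝ)
    (h₁ : M₁.rank = m) (h₂ : M₂.rank = m)
    (P₁ P₂ : Matrix (Fin n) (Fin m) ℝ)
    (hP₁ : P₁ = M₁ᵀ * (M₁ * M₁ᵀ)⁻¹)
    (hP₂ : P₂ = M₂ᵀ * (M₂ * M₂ᵀ)⁻¹) :
    ‖P₁ - P₂‖ ≤ Real.sqrt 2 * ‖P₁‖ * ‖P₂‖ * ‖M₁ - M₂‖ := by
  simp only [← conjTranspose_eq_transpose_of_trivial] at hP₁ hP₂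
  subst hP₁ hP₂
  exact norm_rightPinv_sub_rightPinv_le
    (isUnit_mul_conjTranspose_of_rank_eq_card (h₁.trans (Fintype.card_fin m).symm))
    (isUnit_mul_conjTranspose_of_rank_eq_card (h₂.trans (Fintype.card_fin m).symm))

/-- Wedin pseudo-inverse perturbation bound: if `M₁, M₂ : m × n` (`m ≤ n`)
both have full row rank `m`, then `‖M₁† - M₂†‖ ≤ √2 ‖M₁†‖ ‖M₂†‖ ‖M₁ - M₂‖` in the spectral
norm, where `M† = Mᵀ(MMᵀ)⁻¹` is the Moore–Penrose pseudo-inverse of a full-row-rank matrix. -/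
theorem wedin_pseudoinverse_perturbation
    (m n : ℕ) (hmn : m ≤ n)
    (M₁ M₂ : Matrix (Fin m) (Fin n) ℝ)
    (h₁ : M₁.rank = m) (h₂ : M₂.rank = m)
    (P₁ P₂ : Matrix (Fin n) (Fin m) ℝ)
    (hP₁ : P₁ = M₁ᵀ * (M₁ * M₁ᵀ)⁻¹)
    (hP₂ : P₂ = M₂ᵀ * (M₂ * M₂ᵀ)⁻¹) :
    ‖P₁ - P₂‖ ≤ Real.sqrt 2 * ‖P₁‖ * ‖P₂‖ * ‖M₁ - M₂‖ :=
  wedin_pseudoinverse_perturbation_general m n M₁ M₂ h₁ h₂ P₁ P₂ hP₁ hP₂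
end
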